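/- The operators s_j := (s_j ⊗ 1)·r̂_j, where r̂_j is the braid matrix [[1,0,0,0],[0,1+β(t_{j+1}⊖t_j),0,0],[0,t_{j+1}⊖t_j,1,0],[0,0,0,1]] acting on factors j,j+1 of (ℂ²)^{⊗N} with coefficients in ℚ(β,t₁,…,t_N), and s_j ⊗ 1 denotes the transposition of t_j and t_{j+1} in the coefficient field, satisfy the symmetric group relations: s_j² = Id, s_i s_j = s_j s_i for |i−j| ≥ 2, and s_j s_{j+1} s_j = s_{j+1} s_j s_{j+1}, yielding an action of S_N on ℚ(β,t₁,…,t_N) ⊗ (ℂ²)^{⊗N}. -/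

import Mathlib

/-- The braid matrix `r̂_j` on factors `j, j+1` (0-based) of `(ℂ²)^{⊗N}`:
on a basis vector `v_b` with `b_j = 0, b_{j+1} = 1` it acts as
`v_b ↦ (1+β(t_{j+1}⊖t_j)) v_b + (t_{j+1}⊖t_j) v_{s_j b}`, and as identity
otherwise; `t_{j+1} ⊖ t_j = (t_{j+1}−t_j)/(1+βt_j)`. -/
noncomputable def rhat17 {K : Type*} [Field K] {N : ℕ} (β : K) (t : Fin N → K)
    (j : ℕ) (hj : j + 1 < N) : Matrix (Fin N → Bool) (Fin N → Bool) K :=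
  Matrix.of fun r c =>
    if c ⟨j, by omega⟩ = false ∧ c ⟨j + 1, hj⟩ = true then
      (if r = c then
        1 + β * ((t ⟨j + 1, hj⟩ - t ⟨j, by omega⟩) / (1 + β * t ⟨j, by omega⟩))
       else if r = Function.update (Function.update c ⟨j, by omega⟩ true) ⟨j + 1, hj⟩ false
       then (t ⟨j + 1, hj⟩ - t ⟨j, by omega⟩) / (1 + β * t ⟨j, by omega⟩)
       else 0)
    else (if r = c then 1 else 0)

/-- The semilinear operator `s_j = (s_j ⊗ 1) ∘ r̂_j` on
`ℚ(β,t₁,…,t_N) ⊗ (ℂ²)^{⊗N} ≅ ((Fin N → Bool) → K)`: first apply the braid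
matrix `r̂_j`, then apply the transposition `(j, j+1)` to all coefficients via
the `S_N`-action on the coefficient field. -/
noncomputable def braidOp17 {K : Type*} [Field K] {N : ℕ}
    [MulSemiringAction (Equiv.Perm (Fin N)) K] (β : K) (t : Fin N → K)
    (j : ℕ) (hj : j + 1 < N) : ((Fin N → Bool) → K) → ((Fin N → Bool) → K) :=
  fun f v =>
    (Equiv.swap (⟨j, by omega⟩ : Fin N) ⟨j + 1, hj⟩)
      • (Matrix.mulVec (rhat17 β t j hj) f v)

namespace Braid17

variable {K : Type*} [Field K] {N : ℕ}

noncomputable def xv (β : K) (t : Fin N → K) (j : ℕ) (hj : j + 1 < N) : K :=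
  (t ⟨j + 1, hj⟩ - t ⟨j, by omega⟩) / (1 + β * t ⟨j, by omega⟩)

noncomputable def aC (β : K) (t : Fin N → K) (j : ℕ) (hj : j + 1 < N) (v : Fin N → Bool) : K :=
  if v ⟨j, by omega⟩ = false ∧ v ⟨j + 1, hj⟩ = true then 1 + β * xv β t j hj else 1

noncomputable def bC (β : K) (t : Fin N → K) (j : ℕ) (hj : j + 1 < N) (v : Fin N → Bool) : K :=
  if v ⟨j, by omega⟩ = true ∧ v ⟨j + 1, hj⟩ = false then xv β t j hj else 0

lemma comp_swap_swap (v : Fin N → Bool) (a b : Fin N) :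
    (v ∘ Equiv.swap a b) ∘ Equiv.swap a b = v := by
  funext k; simp [Function.comp, Equiv.swap_apply_self]

lemma flip_eq (j : ℕ) (hj : j + 1 < N) (c : Fin N → Bool)
    (h0 : c ⟨j, by omega⟩ = false) (h1 : c ⟨j + 1, hj⟩ = true) :
    Function.update (Function.update c ⟨j, by omega⟩ true) ⟨j + 1, hj⟩ false
      = c ∘ Equiv.swap (⟨j, by omega⟩ : Fin N) ⟨j + 1, hj⟩ := by
  have hne : (⟨j, by omega⟩ : Fin N) ≠ ⟨j + 1, hj⟩ := by simp [Fin.ext_iff]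
  funext k
  rcases eq_or_ne k ⟨j + 1, hj⟩ with rfl | hk1
  · simp [Function.comp, Equiv.swap_apply_right, h0]
  · rw [Function.update_of_ne hk1]
    rcases eq_or_ne k ⟨j, by omega⟩ with rfl | hk0
    · simp [Function.comp, Equiv.swap_apply_left, h1]
    · rw [Function.update_of_ne hk0]
      simp [Function.comp, Equiv.swap_apply_of_ne_of_ne hk0 hk1]

lemma entry (β : K) (t : Fin N → K) (j : ℕ) (hj : j + 1 < N) (v c : Fin N → Bool) :
    rhat17 β t j hj v c =
      (if c = v then aC β t j hj v else 0) +
      (if c = v ∘ Equiv.swap (⟨j, by omega⟩ : Fin N) ⟨j + 1, hj⟩ ∧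
          v ⟨j, by omega⟩ = true ∧ v ⟨j + 1, hj⟩ = false
       then xv β t j hj else 0) := by
  simp only [rhat17, Matrix.of_apply, aC, bC, xv]
  by_cases hc : c ⟨j, by omega⟩ = false ∧ c ⟨j + 1, hj⟩ = true
  · rw [if_pos hc]
    obtain ⟨hc0, hc1⟩ := hc
    by_cases hvc : v = c
    · subst hvc
      rw [if_pos rfl, if_pos rfl, if_pos ⟨hc0, hc1⟩]
      rw [if_neg (by rintro ⟨-, h, -⟩; rw [hc0] at h; exact Bool.false_ne_true h)]
      ring
    · rw [flip_eq j hj c hc0 hc1, if_neg hvc]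
      by_cases hvf : v = c ∘ Equiv.swap (⟨j, by omega⟩ : Fin N) ⟨j + 1, hj⟩
      · rw [if_pos hvf, if_neg (fun h => hvc h.symm)]
        have hcv : c = v ∘ Equiv.swap (⟨j, by omega⟩ : Fin N) ⟨j + 1, hj⟩ := by
          rw [hvf, comp_swap_swap]
        have hv0 : v ⟨j, by omega⟩ = true := by
          rw [hvf]; simp [Function.comp, Equiv.swap_apply_left, hc1]
        have hv1 : v ⟨j + 1, hj⟩ = false := by
          rw [hvf]; simp [Function.comp, Equiv.swap_apply_right, hc0]
        rw [if_pos ⟨hcv, hv0, hv1⟩]; ring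
      · rw [if_neg hvf, if_neg (fun h => hvc h.symm)]
        rw [if_neg (by
          rintro ⟨hcv, -, -⟩
          exact hvf (by rw [hcv, comp_swap_swap]))]
        ring
  · rw [if_neg hc]
    have h2 : ¬(c = v ∘ Equiv.swap (⟨j, by omega⟩ : Fin N) ⟨j + 1, hj⟩ ∧
        v ⟨j, by omega⟩ = true ∧ v ⟨j + 1, hj⟩ = false) := by
      rintro ⟨hcv, hv0, hv1⟩
      exact hc ⟨by rw [hcv]; simpa [Function.comp, Equiv.swap_apply_left] using hv1,
                by rw [hcv]; simpa [Function.comp, Equiv.swap_apply_right] using hv0⟩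
    rw [if_neg h2, add_zero]
    by_cases hvc : v = c
    · subst hvc
      rw [if_pos rfl, if_pos rfl]
      rw [if_neg (fun h => hc ⟨h.1, h.2⟩)]
    · rw [if_neg hvc, if_neg (fun h => hvc h.symm)]

lemma braidOp_eval [MulSemiringAction (Equiv.Perm (Fin N)) K] (β : K) (t : Fin N → K)
    (j : ℕ) (hj : j + 1 < N) (f : (Fin N → Bool) → K) (v : Fin N → Bool) :
    braidOp17 β t j hj f v =
      (Equiv.swap (⟨j, by omega⟩ : Fin N) ⟨j + 1, hj⟩) •
        (aC β t j hj v * f v +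
          bC β t j hj v * f (v ∘ Equiv.swap (⟨j, by omega⟩ : Fin N) ⟨j + 1, hj⟩)) := by
  unfold braidOp17
  congr 1
  rw [Matrix.mulVec, dotProduct]
  simp only [entry, add_mul, ite_mul, zero_mul, Finset.sum_add_distrib, ite_and]
  rw [Finset.sum_ite_eq', Finset.sum_ite_eq']
  simp only [Finset.mem_univ, if_true, bC, ite_mul, zero_mul, ← ite_and, true_and]

variable [MulSemiringAction (Equiv.Perm (Fin N)) K]

lemma smul_div (w : Equiv.Perm (Fin N)) (a b : K) : w • (a / b) = w • a / w • b :=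
  map_div₀ (MulSemiringAction.toRingHom (Equiv.Perm (Fin N)) K w) a b

lemma rel1aux (β : K) (t : Fin N → K)
    (ht : ∀ (w : Equiv.Perm (Fin N)) (i : Fin N), w • t i = t (w i))
    (hβ : ∀ w : Equiv.Perm (Fin N), w • β = β)
    (hinv : ∀ i : Fin N, 1 + β * t i ≠ 0)
    (j : ℕ) (hj : j + 1 < N) :
    braidOp17 β t j hj ∘ braidOp17 β t j hj = id := by
  funext f v
  have hne : (⟨j, by omega⟩ : Fin N) ≠ ⟨j + 1, hj⟩ := by simp [Fin.ext_iff]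
  simp only [Function.comp_apply, id_eq]
  rw [braidOp_eval, braidOp_eval, braidOp_eval, comp_swap_swap]
  set e0 : Fin N := ⟨j, by omega⟩ with he0
  set e1 : Fin N := ⟨j + 1, hj⟩ with he1
  set σ : Equiv.Perm (Fin N) := Equiv.swap e0 e1 with hσ
  have hbits0 : (v ∘ σ) e0 = v e1 := by simp [hσ, Equiv.swap_apply_left]
  have hbits1 : (v ∘ σ) e1 = v e0 := by simp [hσ, Equiv.swap_apply_right]
  have hss : ∀ z : K, σ • σ • z = z := by
    intro z; rw [smul_smul, hσ, Equiv.swap_mul_self, one_smul]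
  have hx : σ • xv β t j hj = (t e0 - t e1) / (1 + β * t e1) := by
    rw [xv, smul_div, smul_sub, smul_add, smul_one, smul_mul', hβ, ht, ht]
    simp [hσ, Equiv.swap_apply_left, Equiv.swap_apply_right, he0, he1]
  have hx2 : σ • ((t e0 - t e1) / (1 + β * t e1)) = xv β t j hj := by
    rw [← hx, hss]
  cases h0 : v e0 <;> cases h1 : v e1 <;>
    simp only [aC, bC, ← he0, ← he1, ← hσ, h0, h1, hbits0, hbits1, and_self, and_true,
      true_and, and_false, false_and, if_true, if_false, Bool.true_eq_false,
      Bool.false_eq_true, ite_true, ite_false, one_mul, zero_mul, add_zero, zero_add] <;>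
    simp only [smul_add, smul_mul', smul_one, smul_zero, hss, hβ, hx, hx2]
  all_goals
    simp only [xv, ← he0, ← he1]
    have a0 : 1 + t e0 * β ≠ 0 := by rw [mul_comm]; exact hinv e0
    have a1 : 1 + t e1 * β ≠ 0 := by rw [mul_comm]; exact hinv e1
    field_simp [hinv e0, hinv e1]; ring

lemma rel2aux (β : K) (t : Fin N → K)
    (ht : ∀ (w : Equiv.Perm (Fin N)) (i : Fin N), w • t i = t (w i))
    (hβ : ∀ w : Equiv.Perm (Fin N), w • β = β)
    (i j : ℕ) (hi : i + 1 < N) (hj : j + 1 < N) (hij : i + 2 ≤ j) :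
    braidOp17 β t i hi ∘ braidOp17 β t j hj
      = braidOp17 β t j hj ∘ braidOp17 β t i hi := by
  funext f v
  set e0 : Fin N := ⟨i, by omega⟩ with he0
  set e1 : Fin N := ⟨i + 1, hi⟩ with he1
  set d0 : Fin N := ⟨j, by omega⟩ with hd0
  set d1 : Fin N := ⟨j + 1, hj⟩ with hd1
  have ne01 : e0 ≠ e1 := by simp [he0, he1, Fin.ext_iff]
  have ned : d0 ≠ d1 := by simp [hd0, hd1, Fin.ext_iff]
  have ne00 : e0 ≠ d0 := by simp [he0, hd0, Fin.ext_iff]; omega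
  have ne01' : e0 ≠ d1 := by simp [he0, hd1, Fin.ext_iff]; omega
  have ne10 : e1 ≠ d0 := by simp [he1, hd0, Fin.ext_iff]; omega
  have ne11 : e1 ≠ d1 := by simp [he1, hd1, Fin.ext_iff]; omega
  set σ : Equiv.Perm (Fin N) := Equiv.swap e0 e1 with hσ
  set τ : Equiv.Perm (Fin N) := Equiv.swap d0 d1 with hτ
  -- σ fixes d0 d1
  have hσd0 : σ d0 = d0 := Equiv.swap_apply_of_ne_of_ne (Ne.symm ne00) (Ne.symm ne10)
  have hσd1 : σ d1 = d1 := Equiv.swap_apply_of_ne_of_ne (Ne.symm ne01') (Ne.symm ne11)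
  have hτe0 : τ e0 = e0 := Equiv.swap_apply_of_ne_of_ne ne00 ne01'
  have hτe1 : τ e1 = e1 := Equiv.swap_apply_of_ne_of_ne ne10 ne11
  have hcomm : σ * τ = τ * σ := by
    ext k
    simp only [Equiv.Perm.mul_apply, hσ, hτ, Equiv.swap_apply_def]
    split_ifs <;> simp_all [Fin.ext_iff] <;> omega
  have hts : ∀ z : K, σ • τ • z = τ • σ • z := by
    intro z; rw [smul_smul, smul_smul, hcomm]
  -- σ fixes the j-coefficients
  have hσxj : σ • xv β t j hj = xv β t j hj := by
    rw [xv, smul_div, smul_sub, smul_add, smul_one, smul_mul', hβ, ht, ht]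
    rw [show (⟨j, by omega⟩ : Fin N) = d0 from rfl, show (⟨j + 1, hj⟩ : Fin N) = d1 from rfl,
      hσd0, hσd1]
  have hτxi : τ • xv β t i hi = xv β t i hi := by
    rw [xv, smul_div, smul_sub, smul_add, smul_one, smul_mul', hβ, ht, ht]
    rw [show (⟨i, by omega⟩ : Fin N) = e0 from rfl, show (⟨i + 1, hi⟩ : Fin N) = e1 from rfl,
      hτe0, hτe1]
  have hσaj : ∀ w, σ • aC β t j hj w = aC β t j hj w := by
    intro w
    rw [aC, apply_ite (fun z : K => σ • z), smul_add, smul_one, smul_mul', hβ, hσxj]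
  have hσbj : ∀ w, σ • bC β t j hj w = bC β t j hj w := by
    intro w
    rw [bC, apply_ite (fun z : K => σ • z), smul_zero, hσxj]
  have hτai : ∀ w, τ • aC β t i hi w = aC β t i hi w := by
    intro w
    rw [aC, apply_ite (fun z : K => τ • z), smul_add, smul_one, smul_mul', hβ, hτxi]
  have hτbi : ∀ w, τ • bC β t i hi w = bC β t i hi w := by
    intro w
    rw [bC, apply_ite (fun z : K => τ • z), smul_zero, hτxi]
  -- coefficients only depend on the relevant bits
  have haj : ∀ w : Fin N → Bool, aC β t j hj (w ∘ σ) = aC β t j hj w := by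
    intro w; rw [aC, aC]
    simp only [Function.comp_apply]
    rw [show ((⟨j, by omega⟩ : Fin N)) = d0 from rfl, show ((⟨j + 1, hj⟩ : Fin N)) = d1 from rfl]
    simp only [hσd0, hσd1]
  have hbj : ∀ w : Fin N → Bool, bC β t j hj (w ∘ σ) = bC β t j hj w := by
    intro w; rw [bC, bC]
    simp only [Function.comp_apply]
    rw [show ((⟨j, by omega⟩ : Fin N)) = d0 from rfl, show ((⟨j + 1, hj⟩ : Fin N)) = d1 from rfl]
    simp only [hσd0, hσd1]
  have hai : ∀ w : Fin N → Bool, aC β t i hi (w ∘ τ) = aC β t i hi w := by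
    intro w; rw [aC, aC]
    simp only [Function.comp_apply]
    rw [show ((⟨i, by omega⟩ : Fin N)) = e0 from rfl, show ((⟨i + 1, hi⟩ : Fin N)) = e1 from rfl]
    simp only [hτe0, hτe1]
  have hbi : ∀ w : Fin N → Bool, bC β t i hi (w ∘ τ) = bC β t i hi w := by
    intro w; rw [bC, bC]
    simp only [Function.comp_apply]
    rw [show ((⟨i, by omega⟩ : Fin N)) = e0 from rfl, show ((⟨i + 1, hi⟩ : Fin N)) = e1 from rfl]
    simp only [hτe0, hτe1]
  have harg : (v ∘ σ) ∘ τ = (v ∘ τ) ∘ σ := by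
    funext k
    simp only [Function.comp_apply]
    rw [← Equiv.Perm.mul_apply, hcomm, Equiv.Perm.mul_apply]
  simp only [Function.comp_apply, braidOp_eval, ← he0, ← he1, ← hd0, ← hd1, ← hσ, ← hτ]
  have h1 : ∀ w, τ • σ • aC β t i hi w = σ • aC β t i hi w := fun w => by rw [← hts, hτai]
  have h2 : ∀ w, τ • σ • bC β t i hi w = σ • bC β t i hi w := fun w => by rw [← hts, hτbi]
  simp only [haj, hbj, hai, hbi, harg, smul_add, smul_mul', hσaj, hσbj, hτai, hτbi, hts, h1, h2]
  ring

set_option maxHeartbeats 1200000 in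
lemma rel3aux (β : K) (t : Fin N → K)
    (ht : ∀ (w : Equiv.Perm (Fin N)) (i : Fin N), w • t i = t (w i))
    (hβ : ∀ w : Equiv.Perm (Fin N), w • β = β)
    (hinv : ∀ i : Fin N, 1 + β * t i ≠ 0)
    (j : ℕ) (hj : j + 2 < N) :
    braidOp17 β t j (by linarith) ∘ braidOp17 β t (j + 1) (by linarith)
        ∘ braidOp17 β t j (by linarith)
      = braidOp17 β t (j + 1) (by linarith) ∘ braidOp17 β t j (by linarith)
        ∘ braidOp17 β t (j + 1) (by linarith) := by
  funext f v
  set e0 : Fin N := ⟨j, by omega⟩ with he0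
  set e1 : Fin N := ⟨j + 1, by omega⟩ with he1
  set e2 : Fin N := ⟨j + 2, by omega⟩ with he2
  set σ : Equiv.Perm (Fin N) := Equiv.swap e0 e1 with hσ
  set τ : Equiv.Perm (Fin N) := Equiv.swap e1 e2 with hτ
  have fv0 : ∀ h : j < N, (⟨j, h⟩ : Fin N) = e0 := fun _ => rfl
  have fv1 : ∀ h : j + 1 < N, (⟨j + 1, h⟩ : Fin N) = e1 := fun _ => rfl
  have fv2 : ∀ h : j + 2 < N, (⟨j + 2, h⟩ : Fin N) = e2 := fun _ => rfl
  have fv2' : ∀ h : j + 1 + 1 < N, (⟨j + 1 + 1, h⟩ : Fin N) = e2 := fun _ => rfl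
  have fσ : ∀ (h : j < N) (h' : j + 1 < N), Equiv.swap (⟨j, h⟩ : Fin N) ⟨j + 1, h'⟩ = σ :=
    fun _ _ => rfl
  have fτ : ∀ (h : j + 1 < N) (h' : j + 1 + 1 < N),
      Equiv.swap (⟨j + 1, h⟩ : Fin N) ⟨j + 1 + 1, h'⟩ = τ := fun _ _ => rfl
  have ne01 : e0 ≠ e1 := by simp [he0, he1, Fin.ext_iff]
  have ne02 : e0 ≠ e2 := by simp [he0, he2, Fin.ext_iff]
  have ne12 : e1 ≠ e2 := by simp [he1, he2, Fin.ext_iff]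
  have s0 : σ e0 = e1 := Equiv.swap_apply_left _ _
  have s1 : σ e1 = e0 := Equiv.swap_apply_right _ _
  have s2 : σ e2 = e2 := Equiv.swap_apply_of_ne_of_ne (Ne.symm ne02) (Ne.symm ne12)
  have t0 : τ e0 = e0 := Equiv.swap_apply_of_ne_of_ne ne01 ne02
  have t1 : τ e1 = e2 := Equiv.swap_apply_left _ _
  have t2 : τ e2 = e1 := Equiv.swap_apply_right _ _
  have hb : σ * τ * σ = τ * σ * τ := by
    ext k
    simp only [Equiv.Perm.mul_apply]
    rcases eq_or_ne k e0 with rfl | k0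
    · simp only [s0, s1, s2, t0, t1, t2]
    rcases eq_or_ne k e1 with rfl | k1
    · simp only [s0, s1, s2, t0, t1, t2]
    rcases eq_or_ne k e2 with rfl | k2
    · simp only [s0, s1, s2, t0, t1, t2]
    · have hσk : σ k = k := Equiv.swap_apply_of_ne_of_ne k0 k1
      have hτk : τ k = k := Equiv.swap_apply_of_ne_of_ne k1 k2
      simp only [hσk, hτk]
  have cσ : ∀ w : Fin N → Bool, (w ∘ σ) ∘ σ = w := fun w => comp_swap_swap w e0 e1
  have cτ : ∀ w : Fin N → Bool, (w ∘ τ) ∘ τ = w := fun w => comp_swap_swap w e1 e2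
  have hargb : ((v ∘ σ) ∘ τ) ∘ σ = ((v ∘ τ) ∘ σ) ∘ τ := by
    funext k
    simp only [Function.comp_apply, ← Equiv.Perm.mul_apply]
    rw [← mul_assoc, ← mul_assoc, hb]
  have hfs : ∀ z : K, τ • σ • τ • z = σ • τ • σ • z := fun z => by
    rw [smul_smul, smul_smul, ← hb, ← smul_smul, ← smul_smul]
  have hss : ∀ (ρ : Equiv.Perm (Fin N)) (a b : K), ρ • (a - b) = ρ • a - ρ • b :=
    fun ρ a b => smul_sub ρ a b
  simp only [Function.comp_apply, braidOp_eval]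
  simp only [fσ, fτ, fv0, fv1, fv2, fv2']
  rw [← hσ, ← hτ]
  simp only [cσ, cτ, hargb]
  have a0 : 1 + t e0 * β ≠ 0 := by rw [mul_comm]; exact hinv e0
  have a1 : 1 + t e1 * β ≠ 0 := by rw [mul_comm]; exact hinv e1
  have a2 : 1 + t e2 * β ≠ 0 := by rw [mul_comm]; exact hinv e2
  cases h0 : v e0 <;> cases h1 : v e1 <;> cases h2 : v e2
  all_goals
    try simp only [aC, bC, Function.comp_apply, s0, s1, s2, t0, t1, t2, fv0, fv1, fv2, fv2',
      h0, h1, h2, and_self, and_true, true_and, and_false, false_and, if_true, if_false,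
      Bool.true_eq_false, Bool.false_eq_true, ite_true, ite_false, one_mul, zero_mul,
      mul_zero, mul_one, add_zero, zero_add, smul_zero]
  all_goals
    try simp only [xv, fv0, fv1, fv2, fv2', smul_add, hss, smul_mul', smul_one, smul_zero,
      smul_div, hβ, ht, s0, s1, s2, t0, t1, t2, one_mul, zero_mul, mul_zero, mul_one,
      add_zero, zero_add]
  all_goals try simp only [hfs]
  all_goals try (field_simp [hinv e0, hinv e1, hinv e2]; ring; done)
  all_goals (field_simp [a0, a1, a2]; ring)

end Braid17

/-- The operators `s_j = (s_j ⊗ 1) r̂_j` satisfy the Coxeter relations of the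
symmetric group `S_N`: `s_j² = Id`, `s_i s_j = s_j s_i` for `|i−j| ≥ 2`, and
`s_j s_{j+1} s_j = s_{j+1} s_j s_{j+1}`, yielding an `S_N`-action on
`ℚ(β,t₁,…,t_N) ⊗ (ℂ²)^{⊗N}`. -/
theorem braid_operators_symmetric_group_action {K : Type*} [Field K] {N : ℕ}
    [MulSemiringAction (Equiv.Perm (Fin N)) K] (β : K) (t : Fin N → K)
    (ht : ∀ (w : Equiv.Perm (Fin N)) (i : Fin N), w • t i = t (w i))
    (hβ : ∀ w : Equiv.Perm (Fin N), w • β = β)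
    (hinv : ∀ i : Fin N, 1 + β * t i ≠ 0) :
    (∀ (j : ℕ) (hj : j + 1 < N),
        braidOp17 β t j hj ∘ braidOp17 β t j hj = id) ∧
    (∀ (i j : ℕ) (hi : i + 1 < N) (hj : j + 1 < N), i + 2 ≤ j ∨ j + 2 ≤ i →
        braidOp17 β t i hi ∘ braidOp17 β t j hj
          = braidOp17 β t j hj ∘ braidOp17 β t i hi) ∧
    (∀ (j : ℕ) (hj : j + 2 < N),
        braidOp17 β t j (by omega) ∘ braidOp17 β t (j + 1) (by omega)
            ∘ braidOp17 β t j (by omega)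
          = braidOp17 β t (j + 1) (by omega) ∘ braidOp17 β t j (by omega)
            ∘ braidOp17 β t (j + 1) (by omega)) := by
  refine ⟨fun j hj => Braid17.rel1aux β t ht hβ hinv j hj,
    fun i j hi hj h => ?_,
    fun j hj => Braid17.rel3aux β t ht hβ hinv j hj⟩
  rcases h with h | h
  · exact Braid17.rel2aux β t ht hβ i j hi hj h
  · exact (Braid17.rel2aux β t ht hβ j i hj hi h).symm
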